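/- arXiv:1910.08032 — 2 statements merged into one kernel-verified Lean document; each statement's English description precedes it below -/
import Mathlib

section
/- Let n and C be positive natural numbers and let f : ℝⁿ → ℝ^C be a map whose components are all nonnegative (f_i(x) ≥ 0 for every class index i and every x). Suppose f is ℓ∞/ℓ2 Lipschitz with constant L∞ > 0, i.e., for all x, y ∈ ℝⁿ, ‖f(x) − f(y)‖_∞ ≤ L∞ · ‖x − y‖_2. Fix x ∈ ℝⁿ and a class c such that f_c(x) > f_i(x) for every i ≠ c, and let μ = f_c(x) − max_{i ≠ c} f_i(x) (so μ > 0). Then for every y ∈ ℝⁿ with ‖x − y‖_2 < μ / (2·L∞), it holds that f_c(y) > f_i(y) for every i ≠ c; that is, the open ℓ2-ball of radius μ/(2 L∞) centered at x is class pure for the classifier that assigns to each input the class with the largest component of f. -/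
/-- **Theorem 1 (local class purity).**
If `f : ℝⁿ → ℝ^C` is rectified (all components nonnegative) and ℓ∞/ℓ2 Lipschitz
with constant `L∞ > 0` (sup norm on the output, Euclidean norm on the input),
`c` is the winning class at `x`, and `μ = f_c(x) − max_{i ≠ c} f_i(x)`, then every
`y` in the open Euclidean ball of radius `μ / (2 L∞)` about `x` receives the same
class decision: `f_c(y) > f_i(y)` for all `i ≠ c`. -/
theorem local_class_purity
    {n C : ℕ} (hn : 0 < n) (hC : 0 < C)
    (f : EuclideanSpace ℝ (Fin n) → (Fin C → ℝ))
    (hrect : ∀ x i, 0 ≤ f x i)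
    (Linf : ℝ) (hL : 0 < Linf)
    (hLip : ∀ x y : EuclideanSpace ℝ (Fin n), ‖f x - f y‖ ≤ Linf * ‖x - y‖)
    (x : EuclideanSpace ℝ (Fin n)) (c : Fin C)
    (hwin : ∀ i : Fin C, i ≠ c → f x i < f x c)
    (μ : ℝ) (hμ : μ = f x c - ⨆ i : {i : Fin C // i ≠ c}, f x i.1)
    (y : EuclideanSpace ℝ (Fin n)) (hy : ‖x - y‖ < μ / (2 * Linf)) :
    ∀ i : Fin C, i ≠ c → f y i < f y c := by
  intro i hi
  haveI : Nonempty {i : Fin C // i ≠ c} := ⟨⟨i, hi⟩⟩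
  have hbdd : BddAbove (Set.range fun j : {i : Fin C // i ≠ c} => f x j.1) :=
    (Set.finite_range _).bddAbove
  -- the sup is < f x c
  have hsup_lt : (⨆ j : {i : Fin C // i ≠ c}, f x j.1) < f x c := by
    obtain ⟨j, hj⟩ := Finite.exists_max (fun j : {i : Fin C // i ≠ c} => f x j.1)
    calc (⨆ j : {i : Fin C // i ≠ c}, f x j.1) ≤ f x j.1 := ciSup_le hj
      _ < f x c := hwin j.1 j.2
  have hμpos : 0 < μ := by rw [hμ]; linarith
  have hile : f x i ≤ ⨆ j : {i : Fin C // i ≠ c}, f x j.1 :=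
    le_ciSup hbdd ⟨i, hi⟩
  have hbound := hLip x y
  have h1 : |f x i - f y i| ≤ Linf * ‖x - y‖ := by
    calc |f x i - f y i| = ‖(f x - f y) i‖ := by simp [Real.norm_eq_abs]
      _ ≤ ‖f x - f y‖ := norm_le_pi_norm _ i
      _ ≤ Linf * ‖x - y‖ := hbound
  have h2 : |f x c - f y c| ≤ Linf * ‖x - y‖ := by
    calc |f x c - f y c| = ‖(f x - f y) c‖ := by simp [Real.norm_eq_abs]
      _ ≤ ‖f x - f y‖ := norm_le_pi_norm _ c
      _ ≤ Linf * ‖x - y‖ := hbound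
  have hε : Linf * ‖x - y‖ < μ / 2 := by
    have := (lt_div_iff₀ (by positivity : (0:ℝ) < 2 * Linf)).mp hy
    nlinarith
  have ha1 := abs_le.mp h1
  have ha2 := abs_le.mp h2
  have hμle : μ ≤ f x c - f x i := by rw [hμ]; linarith
  linarith [ha1.1, ha1.2, ha2.1, ha2.2]
end

section
/- Let n and C be positive natural numbers and let f : ℝⁿ → ℝ^C be a map whose components are all nonnegative. Suppose f is ℓ∞/ℓ∞ Lipschitz with constant L > 0, i.e., for all x, y ∈ ℝⁿ, ‖f(x) − f(y)‖_∞ ≤ L · ‖x − y‖_∞ (supremum norm on both sides). Fix x ∈ ℝⁿ and a class c with f_c(x) > f_i(x) for all i ≠ c, and let μ = f_c(x) − max_{i ≠ c} f_i(x) (so μ > 0). Then for every y ∈ ℝⁿ with ‖x − y‖_2 < μ / (2·L), one has f_c(y) > f_i(y) for every i ≠ c. -/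
/-- **ℓ∞/ℓ∞ variant of Theorem 1.** If `f : ℝⁿ → ℝ^C` is rectified and
ℓ∞/ℓ∞ Lipschitz with constant `L > 0` (sup norm on both sides), `c` wins at `x`
with margin `μ = f_c(x) − max_{i ≠ c} f_i(x)`, then every `y` with Euclidean
distance `‖x − y‖₂ < μ / (2 L)` from `x` satisfies `f_c(y) > f_i(y)` for every
`i ≠ c`. -/
theorem local_class_purity_linf_linf
    {n C : ℕ} (hn : 0 < n) (hC : 0 < C)
    (f : EuclideanSpace ℝ (Fin n) → (Fin C → ℝ))
    (hrect : ∀ x i, 0 ≤ f x i)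
    (L : ℝ) (hL : 0 < L)
    (hLip : ∀ x y : EuclideanSpace ℝ (Fin n),
        ‖f x - f y‖ ≤ L * ‖(fun i => x i - y i : Fin n → ℝ)‖)
    (x : EuclideanSpace ℝ (Fin n)) (c : Fin C)
    (hwin : ∀ i : Fin C, i ≠ c → f x i < f x c)
    (μ : ℝ) (hμ : μ = f x c - ⨆ i : {i : Fin C // i ≠ c}, f x i.1)
    (y : EuclideanSpace ℝ (Fin n)) (hy : ‖x - y‖ < μ / (2 * L)) :
    ∀ i : Fin C, i ≠ c → f y i < f y c := by
  intro i hi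
  haveI : Nonempty {i : Fin C // i ≠ c} := ⟨⟨i, hi⟩⟩
  -- sup-norm of the difference of inputs is bounded by the Euclidean norm
  have hsup : ‖(fun j => x j - y j : Fin n → ℝ)‖ ≤ ‖x - y‖ := by
    rcases n.eq_zero_or_pos with h0 | h0
    · omega
    · haveI : Nonempty (Fin n) := ⟨⟨0, h0⟩⟩
      apply pi_norm_le_iff_of_nonneg (norm_nonneg _) |>.2
      intro j
      have : x j - y j = (x - y) j := rfl
      rw [Real.norm_eq_abs, this]
      have hz : ‖(x - y) j‖ ^ 2 ≤ ‖x - y‖ ^ 2 := by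
        rw [PiLp.norm_sq_eq_of_L2 (fun _ : Fin n => ℝ) (x - y)]
        exact Finset.single_le_sum (f := fun i => ‖(x - y) i‖ ^ 2) (fun i _ => sq_nonneg _) (Finset.mem_univ j)
      have h1 := norm_nonneg (x - y)
      have h2 := norm_nonneg ((x - y) j)
      rw [Real.norm_eq_abs] at hz h2
      nlinarith
  have hLy : ‖f x - f y‖ < μ / 2 := by
    calc ‖f x - f y‖ ≤ L * ‖(fun j => x j - y j : Fin n → ℝ)‖ := hLip x y
      _ ≤ L * ‖x - y‖ := by nlinarith [norm_nonneg (x - y)]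
      _ < L * (μ / (2 * L)) := by
          apply mul_lt_mul_of_pos_left hy hL
      _ = μ / 2 := by field_simp
  have hcomp : ∀ j, |f x j - f y j| < μ / 2 := by
    intro j
    have := norm_le_pi_norm (f x - f y) j
    simp only [Pi.sub_apply, Real.norm_eq_abs] at this
    linarith
  have hbdd : BddAbove (Set.range fun i : {i : Fin C // i ≠ c} => f x i.1) :=
    Set.Finite.bddAbove (Set.finite_range _)
  have hle : f x i ≤ ⨆ i : {i : Fin C // i ≠ c}, f x i.1 :=
    le_ciSup hbdd ⟨i, hi⟩
  have hμi : μ ≤ f x c - f x i := by linarith [hμ ▸ le_refl μ, hle]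
  have h1 := abs_lt.1 (hcomp i)
  have h2 := abs_lt.1 (hcomp c)
  linarith [hμi]
end
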